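/- The preimage of a subinterval under a nonconstant affine map ℝ → ℝ is an interval; consequently, for a CPWL function f with breakpoints x₁ < … < x_k and any CPWL g with breakpoints y₁ < … < y_m, the set of points where g ∘ f fails to be locally affine is finite, of cardinality at most k + k·m + m. -/

import Mathlib

/-
Away from the breakpoints of `f`, the map `f` agrees near `p` with an affine map `t ↦ c t + d`.
If `c = 0`, then `g ∘ f` is constant near `p`; otherwise `g ∘ f` is affine near `p` unless `f p`
is a breakpoint `y_j` of `g`, i.e. unless `p = (y_j - d) / c`. Hence every point where `g ∘ f` is
not locally affine is one of the `k` breakpoints of `f` or one of the `(k + 1) m` values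
`(y_j - d_i) / c_i`, one for each cell `i` of `f` and each breakpoint `j` of `g` (for `c_i = 0`
this is the junk value `0`, a harmless extra exclusion). The statement about preimages is just
monotonicity or antitonicity of `x ↦ c x + d`.
-/

/-- `f` is affine on the set `s`. -/
def IsAffineOn (f : ℝ → ℝ) (s : Set ℝ) : Prop := ∃ c d : ℝ, ∀ y ∈ s, f y = c * y + d

/-- The `i`-th cell of the partition of `ℝ` into intervals determined by the
(increasingly ordered) breakpoints `x 0 < x 1 < … < x (k-1)`. -/
def cellOf {k : ℕ} (x : Fin k → ℝ) (i : Fin (k + 1)) : Set ℝ :=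
  if hk : k = 0 then Set.univ
  else if h0 : i.val = 0 then Set.Iic (x ⟨0, Nat.pos_of_ne_zero hk⟩)
  else if hik : i.val = k then Set.Ici (x ⟨k - 1, by omega⟩)
  else Set.Icc (x ⟨i.val - 1, by have := i.isLt; omega⟩) (x ⟨i.val, by have := i.isLt; omega⟩)

open Set Filter Topology

theorem Set.OrdConnected.preimage_affine {s : Set ℝ} (hs : s.OrdConnected) {c : ℝ} (hc : c ≠ 0)
    (d : ℝ) : ((fun x : ℝ => c * x + d) ⁻¹' s).OrdConnected := by
  rcases hc.lt_or_gt with hneg | hpos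
  · exact hs.preimage_anti fun a b hab => by nlinarith
  · exact hs.preimage_mono fun a b hab => by nlinarith

theorem Set.finite_and_ncard_le_of_subset_range {α ι : Type*} [Finite ι] {s : Set α} {F : ι → α}
    (h : s ⊆ range F) : s.Finite ∧ s.ncard ≤ Nat.card ι := by
  refine ⟨(finite_range F).subset h, ?_⟩
  calc s.ncard ≤ (range F).ncard := ncard_le_ncard h
    _ = (F '' univ).ncard := by rw [image_univ]
    _ ≤ (univ : Set ι).ncard := ncard_image_le
    _ = Nat.card ι := ncard_univ ι

section cellOf

variable {k : ℕ} (x : Fin k → ℝ)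

theorem cellOf_zero (hk : 0 < k) : cellOf x ⟨0, by omega⟩ = Iic (x ⟨0, hk⟩) := by
  rw [cellOf, dif_neg hk.ne', dif_pos rfl]

theorem cellOf_last (hk : 0 < k) :
    cellOf x (Fin.last k) = Ici (x ⟨k - 1, by omega⟩) := by
  simp [cellOf, hk.ne']

theorem cellOf_succ (j : ℕ) (hj : j + 1 < k) :
    cellOf x ⟨j + 1, by omega⟩ = Icc (x ⟨j, by omega⟩) (x ⟨j + 1, hj⟩) := by
  simp [cellOf, show k ≠ 0 by omega, show j + 1 ≠ k by omega]

theorem exists_cellOf_mem_nhds {p : ℝ} (hp : p ∉ range x) : ∃ i, cellOf x i ∈ 𝓝 p := by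
  have hne : ∀ i, x i ≠ p := fun i h => hp ⟨i, h⟩
  rcases Nat.eq_zero_or_pos k with rfl | hk
  · exact ⟨0, by simp [cellOf]⟩
  -- the cell to take is the one ending at the first breakpoint above `p`
  by_cases habove : ∃ n, ∃ hn : n < k, p < x ⟨n, hn⟩
  · classical
    obtain ⟨hn, hpn⟩ := Nat.find_spec habove
    have hmin := fun j (hj : j < Nat.find habove) => Nat.find_min habove hj
    rcases hfind : Nat.find habove with _ | j
    · simp only [hfind] at hpn
      exact ⟨_, (cellOf_zero x hk).symm ▸ Iic_mem_nhds hpn⟩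
    · simp only [hfind] at hn hpn hmin
      have hj : x ⟨j, by omega⟩ < p :=
        (not_lt.mp fun h => hmin j (by omega) ⟨by omega, h⟩).lt_of_ne (hne _)
      exact ⟨_, (cellOf_succ x j hn).symm ▸ Icc_mem_nhds hj hpn⟩
  · push Not at habove
    have hlast : x ⟨k - 1, by omega⟩ < p := (habove _ _).lt_of_ne (hne _)
    exact ⟨_, (cellOf_last x hk).symm ▸ Ici_mem_nhds hlast⟩

end cellOf

section IsAffineOn

variable {f g : ℝ → ℝ} {s t : Set ℝ}

theorem IsAffineOn.mono (hf : IsAffineOn f t) (hst : s ⊆ t) : IsAffineOn f s :=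
  let ⟨c, d, h⟩ := hf
  ⟨c, d, fun y hy => h y (hst hy)⟩

theorem IsAffineOn.exists_Ioo_of_mem_nhds {p : ℝ} (hf : IsAffineOn f s) (hs : s ∈ 𝓝 p) :
    ∃ ε > 0, IsAffineOn f (Ioo (p - ε) (p + ε)) := by
  obtain ⟨ε, hε, hball⟩ := Metric.mem_nhds_iff.mp hs
  exact ⟨ε, hε, hf.mono (Real.ball_eq_Ioo p ε ▸ hball)⟩

theorem isAffineOn_comp_of_eq_const {d : ℝ} (hf : ∀ y ∈ s, f y = d) : IsAffineOn (g ∘ f) s :=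
  ⟨0, g d, fun y hy => by simp [hf y hy]⟩

theorem isAffineOn_comp {c d : ℝ} (hf : ∀ y ∈ s, f y = c * y + d) (hg : IsAffineOn g t)
    (hst : MapsTo f s t) : IsAffineOn (g ∘ f) s := by
  obtain ⟨a, b, hg⟩ := hg
  exact ⟨a * c, a * d + b, fun y hy => by
    rw [Function.comp_apply, hg _ (hst hy), hf y hy]; ring⟩

end IsAffineOn

theorem exists_Ioo_isAffineOn_comp {f g : ℝ → ℝ} {k m : ℕ} {x : Fin k → ℝ} {y : Fin m → ℝ}
    (hfc : Continuous f) {c d : Fin (k + 1) → ℝ} (hf : ∀ i, ∀ t ∈ cellOf x i, f t = c i * t + d i)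
    (hg : ∀ j, IsAffineOn g (cellOf y j)) {p : ℝ} (hpx : p ∉ range x)
    (hpy : ∀ i j, p ≠ (y j - d i) / c i) :
    ∃ ε > 0, IsAffineOn (g ∘ f) (Ioo (p - ε) (p + ε)) := by
  obtain ⟨i, hi⟩ := exists_cellOf_mem_nhds x hpx
  by_cases hci : c i = 0
  · have hconst : ∀ t ∈ cellOf x i, f t = d i := fun t ht => by simp [hf i t ht, hci]
    exact (isAffineOn_comp_of_eq_const hconst).exists_Ioo_of_mem_nhds hi
  have hfp : f p ∉ range y := by
    rintro ⟨j, hj⟩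
    apply hpy i j
    rw [hj, hf i p (mem_of_mem_nhds hi)]
    field_simp
    ring
  obtain ⟨j, hj⟩ := exists_cellOf_mem_nhds y hfp
  exact (isAffineOn_comp (fun t ht => hf i t ht.1) (hg j) fun t ht => ht.2).exists_Ioo_of_mem_nhds
    (inter_mem hi (hfc.continuousAt.preimage_mem_nhds hj))

/-- (a) The preimage of an interval under a nonconstant affine map `ℝ → ℝ` is an
interval; (b) consequently, for CPWL `f` with breakpoints `x₁ < … < x_k` and CPWL `g`
with breakpoints `y₁ < … < y_m`, the set of points where `g ∘ f` fails to be locally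
affine is finite, of cardinality at most `k + k·m + m`. -/
theorem affine_preimage_interval_and_comp_breakpoints :
    (∀ c d : ℝ, c ≠ 0 → ∀ s : Set ℝ, s.OrdConnected →
      ((fun x : ℝ => c * x + d) ⁻¹' s).OrdConnected)
    ∧ ∀ (f g : ℝ → ℝ) (k m : ℕ) (x : Fin k → ℝ) (y : Fin m → ℝ),
        Continuous f → StrictMono x → (∀ i, IsAffineOn f (cellOf x i)) →
        Continuous g → StrictMono y → (∀ j, IsAffineOn g (cellOf y j)) →
        {p : ℝ | ¬ ∃ ε > 0, IsAffineOn (g ∘ f) (Set.Ioo (p - ε) (p + ε))}.Finite ∧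
          {p : ℝ | ¬ ∃ ε > 0, IsAffineOn (g ∘ f) (Set.Ioo (p - ε) (p + ε))}.ncard
            ≤ k + k * m + m := by
  refine ⟨fun c d hc s hs => hs.preimage_affine hc d, ?_⟩
  intro f g k m x y hfc _ hf _ _ hg
  choose c d hcd using hf
  let F : Fin k ⊕ Fin (k + 1) × Fin m → ℝ
    | .inl i => x i
    | .inr (i, j) => (y j - d i) / c i
  have hbad : {p : ℝ | ¬ ∃ ε > 0, IsAffineOn (g ∘ f) (Ioo (p - ε) (p + ε))} ⊆ range F := by
    intro p hp
    by_contra hpF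
    exact hp <| exists_Ioo_isAffineOn_comp hfc hcd hg (fun ⟨i, hi⟩ => hpF ⟨.inl i, hi⟩)
      fun i j h => hpF ⟨.inr (i, j), h.symm⟩
  obtain ⟨hfin, hcard⟩ := finite_and_ncard_le_of_subset_range hbad
  refine ⟨hfin, hcard.trans_eq ?_⟩
  simp only [Nat.card_eq_fintype_card, Fintype.card_sum, Fintype.card_prod, Fintype.card_fin]
  ring
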